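/- Let m ≥ 1 and let d_1,…,d_m be positive integers. For a numerical semigroup S = ⟨d_1,…,d_m⟩ with Hilbert numerator Q_S and p ≥ 0, the coefficient identity C_{m+p}(S)/(m+p)! = ((-1)^m/p!)·(d_1⋯d_m)·( (2^{p+1}/(p+1))·T_{p+1}(δ) + Σ_{r=0}^p C(p,r)·T_{p-r}(σ)·G_r(S) ) holds. -/

import Mathlib

open PowerSeries
open scoped Classical

/-- Substitute `z = e^t`: replace each monomial `z^k` of `Q` by `exp (k*t)` in `ℚ[[t]]`. -/
noncomputable def expSubst (Q : Polynomial ℚ) : PowerSeries ℚ :=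
  Q.sum fun k c => c • PowerSeries.rescale (k : ℚ) (PowerSeries.exp ℚ)

/-- The power series `(e^{x t} - 1)/(x t) = Σ_{n≥0} x^n t^n/(n+1)!`. -/
noncomputable def expDivFactor (x : ℚ) : PowerSeries ℚ :=
  PowerSeries.mk fun n => x ^ n / (Nat.factorial (n + 1) : ℚ)

/-- `A(t) = ∏ i (e^{d_i t}-1)/(d_i t)`. -/
noncomputable def Aser {m : ℕ} (d : Fin m → ℕ) : PowerSeries ℚ :=
  ∏ i, expDivFactor (d i)

/-- `B(t) = (t/(e^t-1)) · A(t)`. -/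
noncomputable def Bser {m : ℕ} (d : Fin m → ℕ) : PowerSeries ℚ :=
  (expDivFactor 1)⁻¹ * Aser d

/-- `C_r = Σ_k k^r · [z^k](1 - Q)`, the alternating syzygy power sum. -/
noncomputable def Csum (Q : Polynomial ℚ) (r : ℕ) : ℚ :=
  ((1 : Polynomial ℚ) - Q).sum fun k c => (k : ℚ) ^ r * c

/-- The Hilbert series `Σ_{s ∈ S} z^s` of a set `S ⊆ ℕ`. -/
noncomputable def hilbertSeries (S : Set ℕ) : PowerSeries ℚ :=
  PowerSeries.mk fun n => if n ∈ S then (1 : ℚ) else 0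

/-!
Under the substitution `z = e^t` a polynomial `P` becomes `Σ_k [z^k]P · e^{kt}`, whose
`t^n`-coefficient is `Σ_k k^n [z^k]P / n!`; hence `C_r(S)/r!` is the `t^r`-coefficient of
`1 - Q(e^t)`. The Hilbert series of `S` is `1/(1-z) - Γ(z)` with `Γ(z) = Σ_{g ∉ S} z^g`, and
`F(z) = ∏ (1 - z^{d_i})` factors as `(1 - z) W(z)` because `m ≥ 1`, so `Q = W - Γ F`.
Since `1 - e^{dt} = -d t · (e^{dt}-1)/(dt)`, the substitution sends `F` to
`(-1)^m (∏ d_i) t^m A(t)` and `W` to `(-1)^{m-1} (∏ d_i) t^{m-1} B(t)`; comparing coefficients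
of `t^{m+p}` gives the identity.
-/

open scoped Nat

lemma coeff_exp_pow (k n : ℕ) : coeff n (exp ℚ ^ k) = (k : ℚ) ^ n / n ! := by
  simp [exp_pow_eq_rescale_exp, coeff_rescale, coeff_exp, div_eq_mul_inv]

lemma coeff_aeval_exp (P : Polynomial ℚ) (n : ℕ) :
    coeff n (Polynomial.aeval (exp ℚ) P) = (P.sum fun k c => c * (k : ℚ) ^ n) / n ! := by
  rw [Polynomial.aeval_eq_sum_range, map_sum, Polynomial.sum_over_range, Finset.sum_div]
  · refine Finset.sum_congr rfl fun k _ => ?_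
    rw [smul_eq_C_mul, coeff_C_mul, coeff_exp_pow, mul_div_assoc]
  · simp

lemma coeff_aeval_exp_sum_X_pow (s : Finset ℕ) (n : ℕ) :
    coeff n (Polynomial.aeval (exp ℚ) (∑ g ∈ s, Polynomial.X ^ g : Polynomial ℚ))
      = (∑ g ∈ s, (g : ℚ) ^ n) / n ! := by
  simp [map_sum, coeff_exp_pow, Finset.sum_div]

lemma C_mul_X_mul_expDivFactor (x : ℚ) : C x * X * expDivFactor x = rescale x (exp ℚ) - 1 := by
  ext (_ | n)
  · simp only [map_sub, map_one, coeff_zero_eq_constantCoeff_apply, coeff_rescale, coeff_exp]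
    simp
  · simp [mul_assoc, coeff_succ_X_mul, expDivFactor, coeff_rescale, coeff_exp, Nat.factorial_succ,
      pow_succ]
    field_simp

lemma aeval_exp_one_sub_X_pow (k : ℕ) :
    Polynomial.aeval (exp ℚ) (1 - Polynomial.X ^ k : Polynomial ℚ)
      = -(C (k : ℚ) * X * expDivFactor k) := by
  rw [C_mul_X_mul_expDivFactor, ← exp_pow_eq_rescale_exp]
  simp

lemma aeval_exp_prod_one_sub_X_pow {m : ℕ} (d : Fin m → ℕ) :
    Polynomial.aeval (exp ℚ) (∏ i, (1 - Polynomial.X ^ d i : Polynomial ℚ))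
      = C ((-1) ^ m * ∏ i, (d i : ℚ)) * X ^ m * Aser d := by
  rw [map_prod, Finset.prod_congr rfl fun i _ => aeval_exp_one_sub_X_pow (d i), Finset.prod_neg]
  simp only [Finset.prod_mul_distrib, Finset.prod_const, Finset.card_univ, Fintype.card_fin, Aser,
    map_mul, map_pow, map_neg, map_one, map_prod]
  ring

lemma constantCoeff_expDivFactor (x : ℚ) : constantCoeff (expDivFactor x) = 1 := by
  simp [expDivFactor]

lemma one_sub_X_dvd_prod_one_sub_X_pow {m : ℕ} (d : Fin (m + 1) → ℕ) :
    (1 - Polynomial.X : Polynomial ℚ) ∣ ∏ i, (1 - Polynomial.X ^ d i) :=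
  (show (1 - Polynomial.X : Polynomial ℚ) ∣ 1 - Polynomial.X ^ d 0 by
    simpa using sub_dvd_pow_sub_pow (1 : Polynomial ℚ) Polynomial.X (d 0)).trans
    (Finset.dvd_prod_of_mem _ (Finset.mem_univ 0))

lemma aeval_exp_of_prod_eq_one_sub_X_mul {m : ℕ} (d : Fin (m + 1) → ℕ) {W : Polynomial ℚ}
    (hW : ∏ i, (1 - Polynomial.X ^ d i) = (1 - Polynomial.X) * W) :
    Polynomial.aeval (exp ℚ) W = C ((-1) ^ m * ∏ i, (d i : ℚ)) * X ^ m * Bser d := by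
  have hE : expDivFactor 1 * (expDivFactor 1)⁻¹ = 1 :=
    PowerSeries.mul_inv_cancel _ (by simp [constantCoeff_expDivFactor])
  have hX : Polynomial.aeval (exp ℚ) (1 - Polynomial.X : Polynomial ℚ)
      = -(X * expDivFactor 1) := by
    simpa using aeval_exp_one_sub_X_pow 1
  have hprod : -(X * expDivFactor 1) * Polynomial.aeval (exp ℚ) W
      = C ((-1) ^ (m + 1) * ∏ i, (d i : ℚ)) * X ^ (m + 1) * Aser d := by
    rw [← hX, ← map_mul, ← hW, aeval_exp_prod_one_sub_X_pow]
  refine mul_left_cancel₀ (a := -(X * expDivFactor 1)) ?_ ?_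
  · exact neg_ne_zero.mpr (mul_ne_zero X_ne_zero (left_ne_zero_of_mul_eq_one hE))
  · rw [hprod, Bser]
    simp only [map_mul, map_pow, map_neg, map_one]
    linear_combination (-1) ^ m * C (∏ i, (d i : ℚ)) * X ^ (m + 1) * Aser d * hE

lemma hilbertSeries_add_sum_X_pow_compl {T : Set ℕ} (hT : {n | n ∉ T}.Finite) :
    hilbertSeries T + ((∑ g ∈ hT.toFinset, Polynomial.X ^ g : Polynomial ℚ) : PowerSeries ℚ)
      = mk 1 := by
  ext n
  by_cases h : n ∈ T <;>
    simp [hilbertSeries, Polynomial.coeff_coe, Polynomial.finsetSum_coeff, Polynomial.coeff_X_pow,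
      h]

lemma eq_sub_sum_X_pow_compl_mul {T : Set ℕ} (hT : {n | n ∉ T}.Finite) {F W Q : Polynomial ℚ}
    (hW : F = (1 - Polynomial.X) * W) (hQ : hilbertSeries T * F = Q) :
    Q = W - (∑ g ∈ hT.toFinset, Polynomial.X ^ g) * F := by
  apply Polynomial.coe_injective
  rw [← hQ, Polynomial.coe_sub, Polynomial.coe_mul, eq_sub_iff_add_eq, ← add_mul,
    hilbertSeries_add_sum_X_pow_compl, hW, Polynomial.coe_mul, ← mul_assoc]
  simp [mk_one_mul_one_sub_eq_one]

lemma Csum_div_factorial_eq_coeff_aeval_exp (Q : Polynomial ℚ) (r : ℕ) :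
    Csum Q r / r ! = coeff r (Polynomial.aeval (exp ℚ) (1 - Q)) := by
  simp only [coeff_aeval_exp, Csum, mul_comm]

lemma coeff_add_C_mul_X_pow_mul (c : ℚ) (f : PowerSeries ℚ) (n k : ℕ) :
    coeff (n + k) (C c * X ^ k * f) = c * coeff n f := by
  rw [mul_assoc, coeff_C_mul, coeff_X_pow_mul]

lemma Csum_div_factorial_eq_of_hilbertSeries_mul {m : ℕ} (d : Fin (m + 1) → ℕ) {S : Set ℕ}
    (hS : {n | n ∉ S}.Finite) {Q : Polynomial ℚ}
    (hQ : hilbertSeries S * ∏ i, (1 - X ^ d i) = (Q : PowerSeries ℚ)) (p : ℕ) :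
    Csum Q (m + 1 + p) / (m + 1 + p)! = (-1) ^ (m + 1) * (∏ i, (d i : ℚ))
      * (coeff (p + 1) (Bser d) + ∑ r ∈ Finset.range (p + 1),
          (∑ g ∈ hS.toFinset, (g : ℚ) ^ r) / r ! * coeff (p - r) (Aser d)) := by
  obtain ⟨W, hW⟩ := one_sub_X_dvd_prod_one_sub_X_pow d
  have hFcoe : ((∏ i, (1 - Polynomial.X ^ d i) : Polynomial ℚ) : PowerSeries ℚ)
      = ∏ i, (1 - X ^ d i) := by
    rw [← Polynomial.coeToPowerSeries.ringHom_apply, map_prod]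
    simp [Polynomial.coeToPowerSeries.ringHom_apply]
  have hQW := eq_sub_sum_X_pow_compl_mul hS hW (hFcoe ▸ hQ)
  set P : Polynomial ℚ := ∑ g ∈ hS.toFinset, Polynomial.X ^ g
  have hP (r : ℕ) :
      coeff r (Polynomial.aeval (exp ℚ) P) = (∑ g ∈ hS.toFinset, (g : ℚ) ^ r) / r ! :=
    coeff_aeval_exp_sum_X_pow _ r
  rw [Csum_div_factorial_eq_coeff_aeval_exp, hQW, sub_sub_eq_add_sub, map_sub, map_add, map_mul,
    map_one, aeval_exp_of_prod_eq_one_sub_X_mul d hW, aeval_exp_prod_one_sub_X_pow]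
  set D : ℚ := ∏ i, (d i : ℚ)
  have hOne : coeff (m + 1 + p) (1 : PowerSeries ℚ) = 0 := by simp [coeff_one]
  have hB : coeff (m + 1 + p) (C ((-1) ^ m * D) * X ^ m * Bser d)
      = (-1) ^ m * D * coeff (p + 1) (Bser d) := by
    rw [show m + 1 + p = p + 1 + m by ring, coeff_add_C_mul_X_pow_mul]
  have hPA : coeff (m + 1 + p)
      (Polynomial.aeval (exp ℚ) P * (C ((-1) ^ (m + 1) * D) * X ^ (m + 1) * Aser d))
      = (-1) ^ (m + 1) * D * ∑ r ∈ Finset.range (p + 1),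
          (∑ g ∈ hS.toFinset, (g : ℚ) ^ r) / r ! * coeff (p - r) (Aser d) := by
    rw [mul_left_comm, show m + 1 + p = p + (m + 1) by ring, coeff_add_C_mul_X_pow_mul,
      coeff_mul, Finset.Nat.sum_antidiagonal_eq_sum_range_succ_mk]
    simp only [hP]
  rw [map_sub, map_add, hOne, hB, hPA]
  ring

lemma sum_range_choose_mul_factorial_mul (p : ℕ) (a b : ℕ → ℚ) :
    ∑ r ∈ Finset.range (p + 1), (p.choose r : ℚ) * ((p - r)! * a (p - r)) * b r
      = p ! * ∑ r ∈ Finset.range (p + 1), b r / r ! * a (p - r) := by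
  rw [Finset.mul_sum]
  refine Finset.sum_congr rfl fun r hr => ?_
  rw [Nat.cast_choose ℚ (Nat.lt_succ_iff.mp (Finset.mem_range.mp hr))]
  field_simp

theorem stmt_19_general (m : ℕ) (hm : 1 ≤ m) (d : Fin m → ℕ)
    (S : AddSubmonoid ℕ)
    (hfin : {n : ℕ | n ∉ S}.Finite)
    (Q : Polynomial ℚ)
    (hQ : hilbertSeries (S : Set ℕ) * ∏ i, (1 - (PowerSeries.X : PowerSeries ℚ) ^ d i)
        = (Q : PowerSeries ℚ))
    (p : ℕ) :
    Csum Q (m + p) / (Nat.factorial (m + p) : ℚ)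
      = ((-1) ^ m / (Nat.factorial p : ℚ)) * (∏ i, (d i : ℚ))
          * ((2 ^ (p + 1) / ((p : ℚ) + 1))
                * ((Nat.factorial (p + 1) : ℚ) / 2 ^ (p + 1)
                    * PowerSeries.coeff (p + 1) (Bser d))
              + ∑ r ∈ Finset.range (p + 1), (p.choose r : ℚ)
                  * ((Nat.factorial (p - r) : ℚ) * PowerSeries.coeff (p - r) (Aser d))
                  * (∑ g ∈ hfin.toFinset, (g : ℚ) ^ r)) := by
  obtain ⟨m, rfl⟩ := Nat.exists_eq_add_of_le' hm
  rw [Csum_div_factorial_eq_of_hilbertSeries_mul d hfin hQ p,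
    sum_range_choose_mul_factorial_mul p (coeff · (Aser d)), Nat.factorial_succ]
  push_cast
  field_simp

theorem stmt_19 (m : ℕ) (hm : 1 ≤ m) (d : Fin m → ℕ) (hd : ∀ i, 0 < d i)
    (hgcd : Finset.univ.gcd d = 1)
    (S : AddSubmonoid ℕ) (hS : (S : Set ℕ) = AddSubmonoid.closure (Set.range d))
    (hfin : {n : ℕ | n ∉ S}.Finite)
    (Q : Polynomial ℚ)
    (hQ : hilbertSeries (S : Set ℕ) * ∏ i, (1 - (PowerSeries.X : PowerSeries ℚ) ^ d i)
        = (Q : PowerSeries ℚ))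
    (p : ℕ) :
    Csum Q (m + p) / (Nat.factorial (m + p) : ℚ)
      = ((-1) ^ m / (Nat.factorial p : ℚ)) * (∏ i, (d i : ℚ))
          * ((2 ^ (p + 1) / ((p : ℚ) + 1))
                * ((Nat.factorial (p + 1) : ℚ) / 2 ^ (p + 1)
                    * PowerSeries.coeff (p + 1) (Bser d))
              + ∑ r ∈ Finset.range (p + 1), (p.choose r : ℚ)
                  * ((Nat.factorial (p - r) : ℚ) * PowerSeries.coeff (p - r) (Aser d))
                  * (∑ g ∈ hfin.toFinset, (g : ℚ) ^ r)) :=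
  stmt_19_general m hm d S hfin Q hQ p
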